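/- Let 𝓕 satisfy the flat axioms (F1)-(F3) and let r = r_𝓕 be the induced rank function. Then the set of flats of the q-matroid (E,r) (subspaces F with r(F+x) > r(F) for all one-dimensional x ⊄ F) is exactly 𝓕. Conversely, if (E,r) is a q-matroid with flats 𝓕_r, then r = r_{𝓕_r}. -/

import Mathlib

/-!
(i) The flat axioms give a diamond property: two distinct flats covering a common flat `a` are
both covered by the closure of their join (if `x` is a line of `F₂` outside `a`, then
`F₂ = C(a + x)`, so `C(F₁ + x) = C(F₁ + F₂)`, and it covers `F₁` by (F3)). A Jordan–Hölder
induction on this property shows that all maximal chains between two flats have the same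
length, so `r_𝓕 A` depends only on `C A`. A subspace `F ∉ 𝓕` therefore gains no rank by adding
a line of `C F` outside `F`, while for `F ∈ 𝓕` the flat `C(F + x)` covers `F`, so
`r(F + x) = r F + 1`.

(ii) Submodularity shows that every flat `F` of `r` satisfies `r B < r (B + x)` for all `B ≤ F`
and lines `x ⊄ F`; hence flats are closed under intersection, a subspace and its closure have
the same rank, and a flat covering a flat has rank exactly one more. Counting along a maximal
chain from `C{0}`, of rank `0`, to `C A` gives `r A = r' A`.
-/

/-- F' covers F in the poset (𝓕, ⊆). -/
def FlatCovers {K E : Type*} [Field K] [AddCommGroup E] [Module K E]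
    (𝓕 : Set (Submodule K E)) (F F' : Submodule K E) : Prop :=
  F < F' ∧ ∀ H ∈ 𝓕, F < H → ¬ H < F'

/-- The flat axioms (F1)-(F3) for a family 𝓕 of subspaces of E. -/
def FlatAxioms {K E : Type*} [Field K] [AddCommGroup E] [Module K E]
    (𝓕 : Set (Submodule K E)) : Prop :=
  (⊤ : Submodule K E) ∈ 𝓕 ∧
  (∀ F₁ ∈ 𝓕, ∀ F₂ ∈ 𝓕, F₁ ⊓ F₂ ∈ 𝓕) ∧
  (∀ F ∈ 𝓕, ∀ x : Submodule K E, Module.finrank K x = 1 → ¬ x ≤ F →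
    ∃! F' : Submodule K E, F' ∈ 𝓕 ∧ x ≤ F' ∧ FlatCovers 𝓕 F F')

/-- `c` is a maximal chain of length `m` in (𝓕,⊆) from `a` to `b`. -/
def IsMaxChainTo {K E : Type*} [Field K] [AddCommGroup E] [Module K E]
    (𝓕 : Set (Submodule K E)) (a b : Submodule K E) (m : ℕ)
    (c : Fin (m + 1) → Submodule K E) : Prop :=
  (∀ i, c i ∈ 𝓕) ∧ StrictMono c ∧ c 0 = a ∧ c (Fin.last m) = b ∧
  ∀ i : Fin m, FlatCovers 𝓕 (c i.castSucc) (c i.succ)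

section QMatroidFlats

open Module

variable {K E : Type*} [Field K] [AddCommGroup E] [Module K E]

def IsFlatClosure (𝓕 : Set (Submodule K E)) (Cl : Submodule K E → Submodule K E) : Prop :=
  ∀ A, Cl A ∈ 𝓕 ∧ A ≤ Cl A ∧ ∀ G ∈ 𝓕, A ≤ G → Cl A ≤ G

def rankFlats {α : Type*} [LT α] (r : Submodule K E → α) : Set (Submodule K E) :=
  {F | ∀ x : Submodule K E, finrank K x = 1 → ¬ x ≤ F → r F < r (F ⊔ x)}

theorem exists_line_of_lt {a b : Submodule K E} (h : a < b) :
    ∃ x : Submodule K E, finrank K x = 1 ∧ x ≤ b ∧ ¬ x ≤ a := by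
  obtain ⟨v, hvb, hva⟩ := SetLike.exists_of_lt h
  have hv : v ≠ 0 := fun hv => hva (hv ▸ a.zero_mem)
  exact ⟨K ∙ v, finrank_span_singleton hv, (Submodule.span_singleton_le_iff_mem _ _).2 hvb,
    fun hle => hva (hle (Submodule.mem_span_singleton_self v))⟩

variable {𝓕 : Set (Submodule K E)} {Cl : Submodule K E → Submodule K E}

theorem FlatCovers.eq_of_lt_of_le {a F G : Submodule K E} (h : FlatCovers 𝓕 a F)
    (hG : G ∈ 𝓕) (haG : a < G) (hGF : G ≤ F) : G = F :=
  hGF.eq_or_lt.resolve_right (h.2 G hG haG)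

namespace IsFlatClosure

theorem mem (hC : IsFlatClosure 𝓕 Cl) (A : Submodule K E) : Cl A ∈ 𝓕 := (hC A).1

theorem le_closure (hC : IsFlatClosure 𝓕 Cl) (A : Submodule K E) : A ≤ Cl A := (hC A).2.1

theorem closure_le (hC : IsFlatClosure 𝓕 Cl) {A G : Submodule K E} (hG : G ∈ 𝓕) (hAG : A ≤ G) :
    Cl A ≤ G :=
  (hC A).2.2 G hG hAG

theorem closure_mono (hC : IsFlatClosure 𝓕 Cl) {A B : Submodule K E} (h : A ≤ B) : Cl A ≤ Cl B :=
  hC.closure_le (hC.mem B) (h.trans (hC.le_closure B))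

theorem closure_eq_of_mem (hC : IsFlatClosure 𝓕 Cl) {F : Submodule K E} (hF : F ∈ 𝓕) : Cl F = F :=
  le_antisymm (hC.closure_le hF le_rfl) (hC.le_closure F)

end IsFlatClosure

namespace IsMaxChainTo

variable {a b : Submodule K E} {m : ℕ} {c : Fin (m + 1) → Submodule K E}

theorem source_mem (h : IsMaxChainTo 𝓕 a b m c) : a ∈ 𝓕 := h.2.2.1 ▸ h.1 0

theorem target_mem (h : IsMaxChainTo 𝓕 a b m c) : b ∈ 𝓕 := h.2.2.2.1 ▸ h.1 _

theorem le_target (h : IsMaxChainTo 𝓕 a b m c) (i : Fin (m + 1)) : c i ≤ b :=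
  h.2.2.2.1 ▸ h.2.1.monotone (Fin.le_last i)

theorem length_eq_zero_iff (h : IsMaxChainTo 𝓕 a b m c) : m = 0 ↔ a = b := by
  rw [← h.2.2.1, ← h.2.2.2.1]
  constructor
  · rintro rfl
    rfl
  · intro hab
    by_contra hm
    exact (h.2.1 (show (0 : Fin (m + 1)) < Fin.last m from Fin.lt_def.2 (by simp; omega))).ne hab

theorem refl (hb : b ∈ 𝓕) : IsMaxChainTo 𝓕 b b 0 (fun _ => b) :=
  ⟨fun _ => hb, fun i j h => absurd (Fin.lt_def.1 h) (by omega), rfl, rfl,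
    fun i => i.elim0⟩

theorem cons {a' : Submodule K E} (hc : IsMaxChainTo 𝓕 a' b m c) (ha : a ∈ 𝓕)
    (hcov : FlatCovers 𝓕 a a') : IsMaxChainTo 𝓕 a b (m + 1) (Fin.cons a c) := by
  obtain ⟨hmem, hmono, rfl, hlast, hcovs⟩ := hc
  refine ⟨Fin.cases ha hmem, Fin.strictMono_iff_lt_succ.2 fun i => ?_, rfl, hlast, fun i => ?_⟩
  · induction i using Fin.cases with
    | zero => exact hcov.1
    | succ j =>
      rw [← Fin.succ_castSucc, Fin.cons_succ, Fin.cons_succ]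
      exact hmono Fin.castSucc_lt_succ
  · induction i using Fin.cases with
    | zero => exact hcov
    | succ j =>
      rw [← Fin.succ_castSucc, Fin.cons_succ, Fin.cons_succ]
      exact hcovs j

theorem snoc {b' : Submodule K E} (hc : IsMaxChainTo 𝓕 a b m c) (hb' : b' ∈ 𝓕)
    (hcov : FlatCovers 𝓕 b b') : IsMaxChainTo 𝓕 a b' (m + 1) (Fin.snoc c b') := by
  obtain ⟨hmem, hmono, hfirst, rfl, hcovs⟩ := hc
  refine ⟨Fin.lastCases (by simpa using hb') (by simpa using hmem),
    Fin.strictMono_iff_lt_succ.2 fun i => ?_, by simpa using hfirst, by simp, fun i => ?_⟩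
  · induction i using Fin.lastCases with
    | last => simpa using hcov.1
    | cast j =>
      rw [Fin.succ_castSucc, Fin.snoc_castSucc, Fin.snoc_castSucc]
      exact hmono Fin.castSucc_lt_succ
  · induction i using Fin.lastCases with
    | last => simpa using hcov
    | cast j =>
      rw [Fin.succ_castSucc, Fin.snoc_castSucc, Fin.snoc_castSucc]
      exact hcovs j

theorem tail {c : Fin (m + 2) → Submodule K E} (hc : IsMaxChainTo 𝓕 a b (m + 1) c) :
    IsMaxChainTo 𝓕 (c 1) b m (fun i => c i.succ) :=
  ⟨fun _ => hc.1 _, fun _ _ h => hc.2.1 (Fin.succ_lt_succ_iff.2 h), rfl,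
    (congrArg c (Fin.succ_last m)).trans hc.2.2.2.1,
    fun i => by simpa only [Fin.succ_castSucc] using hc.2.2.2.2 i.succ⟩

theorem flatCovers_head {c : Fin (m + 2) → Submodule K E} (hc : IsMaxChainTo 𝓕 a b (m + 1) c) :
    FlatCovers 𝓕 a (c 1) :=
  hc.2.2.1 ▸ hc.2.2.2.2 0

end IsMaxChainTo

namespace FlatAxioms

theorem flatCovers_closure_sup (hF : FlatAxioms 𝓕) (hC : IsFlatClosure 𝓕 Cl)
    {F x : Submodule K E} (hFm : F ∈ 𝓕) (hx : finrank K x = 1) (hxF : ¬ x ≤ F) :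
    FlatCovers 𝓕 F (Cl (F ⊔ x)) := by
  obtain ⟨F', ⟨hF'm, hxF', hcov⟩, -⟩ := hF.2.2 F hFm x hx hxF
  have hlt : F < Cl (F ⊔ x) := (left_lt_sup.2 hxF).trans_le (hC.le_closure _)
  rwa [hcov.eq_of_lt_of_le (hC.mem _) hlt (hC.closure_le hF'm (sup_le hcov.1.le hxF'))]

theorem flatCovers_closure_sup_of_ne (hF : FlatAxioms 𝓕) (hC : IsFlatClosure 𝓕 Cl)
    {a F₁ F₂ : Submodule K E} (ha : a ∈ 𝓕) (h₁ : F₁ ∈ 𝓕) (h₂ : F₂ ∈ 𝓕)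
    (hc₁ : FlatCovers 𝓕 a F₁) (hc₂ : FlatCovers 𝓕 a F₂) (hne : F₁ ≠ F₂) :
    FlatCovers 𝓕 F₁ (Cl (F₁ ⊔ F₂)) := by
  obtain ⟨x, hx, hxF₂, hxa⟩ := exists_line_of_lt hc₂.1
  have hF₂ : Cl (a ⊔ x) = F₂ := hc₂.eq_of_lt_of_le (hC.mem _)
    (hF.flatCovers_closure_sup hC ha hx hxa).1 (hC.closure_le h₂ (sup_le hc₂.1.le hxF₂))
  have hxF₁ : ¬ x ≤ F₁ := by
    intro hxF₁
    have hF₂F₁ : F₂ ≤ F₁ := hF₂ ▸ hC.closure_le h₁ (sup_le hc₁.1.le hxF₁)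
    exact hne (hc₁.eq_of_lt_of_le h₂ hc₂.1 hF₂F₁).symm
  have hsup : Cl (F₁ ⊔ x) = Cl (F₁ ⊔ F₂) := by
    refine le_antisymm (hC.closure_mono (sup_le_sup_left hxF₂ _)) (hC.closure_le (hC.mem _) ?_)
    refine sup_le (le_sup_left.trans (hC.le_closure _)) ?_
    exact hF₂ ▸ hC.closure_mono (sup_le_sup_right hc₁.1.le _)
  exact hsup ▸ hF.flatCovers_closure_sup hC h₁ hx hxF₁

variable [FiniteDimensional K E]

theorem exists_isMaxChainTo (hF : FlatAxioms 𝓕) (hC : IsFlatClosure 𝓕 Cl)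
    {a b : Submodule K E} (ha : a ∈ 𝓕) (hb : b ∈ 𝓕) (hab : a ≤ b) :
    ∃ (m : ℕ) (c : Fin (m + 1) → Submodule K E), IsMaxChainTo 𝓕 a b m c := by
  induction a using WellFoundedGT.induction with
  | _ a IH =>
  rcases hab.eq_or_lt with rfl | hlt
  · exact ⟨0, _, .refl ha⟩
  obtain ⟨x, hx, hxb, hxa⟩ := exists_line_of_lt hlt
  have hcov := hF.flatCovers_closure_sup hC ha hx hxa
  obtain ⟨m, c, hc⟩ := IH _ hcov.1 (hC.mem _) (hC.closure_le hb (sup_le hab hxb))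
  exact ⟨m + 1, _, hc.cons ha hcov⟩

theorem length_eq_of_isMaxChainTo (hF : FlatAxioms 𝓕) (hC : IsFlatClosure 𝓕 Cl)
    {a b : Submodule K E} {m m' : ℕ} {c : Fin (m + 1) → Submodule K E}
    {c' : Fin (m' + 1) → Submodule K E}
    (hc : IsMaxChainTo 𝓕 a b m c) (hc' : IsMaxChainTo 𝓕 a b m' c') : m = m' := by
  induction m using Nat.strong_induction_on generalizing a m' c' with
  | _ m IH =>
  rcases m with _ | m
  · exact (hc'.length_eq_zero_iff.2 (hc.length_eq_zero_iff.1 rfl)).symm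
  rcases m' with _ | m'
  · exact hc.length_eq_zero_iff.2 (hc'.length_eq_zero_iff.1 rfl)
  by_cases h : c 1 = c' 1
  · have := IH m (by omega) hc.tail (h ▸ hc'.tail)
    omega
  -- Both `c 1` and `c' 1` are covered by `G = Cl (c 1 ⊔ c' 1)`: compare through a chain `G → b`.
  have hb := hc.target_mem
  obtain ⟨t, d, hd⟩ := hF.exists_isMaxChainTo hC (hC.mem (c 1 ⊔ c' 1)) hb
    (hC.closure_le hb (sup_le (hc.le_target 1) (hc'.le_target 1)))
  have hcov := hF.flatCovers_closure_sup_of_ne hC hc.source_mem (hc.1 1) (hc'.1 1)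
    hc.flatCovers_head hc'.flatCovers_head h
  have hcov' := hF.flatCovers_closure_sup_of_ne hC hc.source_mem (hc'.1 1) (hc.1 1)
    hc'.flatCovers_head hc.flatCovers_head (Ne.symm h)
  rw [sup_comm] at hcov'
  have h₁ := IH m (by omega) hc.tail (hd.cons (hc.1 1) hcov)
  have h₂ := IH (t + 1) (by omega) (hd.cons (hc'.1 1) hcov') hc'.tail
  omega

theorem rankFlats_eq (hF : FlatAxioms 𝓕) (hC : IsFlatClosure 𝓕 Cl) {r : Submodule K E → ℕ}
    (hr : ∀ A, ∃ c : Fin (r A + 1) → Submodule K E, IsMaxChainTo 𝓕 (Cl ⊥) (Cl A) (r A) c) :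
    rankFlats r = 𝓕 := by
  have rank_eq {A B : Submodule K E} (h : Cl A = Cl B) : r A = r B := by
    obtain ⟨c, hc⟩ := hr A
    obtain ⟨c', hc'⟩ := hr B
    exact hF.length_eq_of_isMaxChainTo hC hc (h ▸ hc')
  ext F
  refine ⟨fun hFr => by_contra fun hF𝓕 => ?_, fun hF𝓕 x hx hxF => ?_⟩
  · have hlt : F < Cl F := (hC.le_closure F).lt_of_ne fun h => hF𝓕 (h ▸ hC.mem F)
    obtain ⟨x, hx, hxC, hxF⟩ := exists_line_of_lt hlt
    have hCl : Cl F = Cl (F ⊔ x) := le_antisymm (hC.closure_mono le_sup_left)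
      (hC.closure_le (hC.mem F) (sup_le (hC.le_closure F) hxC))
    exact (hFr x hx hxF).ne (rank_eq hCl)
  · obtain ⟨c, hc⟩ := hr F
    obtain ⟨c', hc'⟩ := hr (F ⊔ x)
    rw [hC.closure_eq_of_mem hF𝓕] at hc
    have := hF.length_eq_of_isMaxChainTo hC
      (hc.snoc (hC.mem _) (hF.flatCovers_closure_sup hC hF𝓕 hx hxF)) hc'
    omega

end FlatAxioms

section RankFunction

variable {r : Submodule K E → ℤ}

theorem IsMaxChainTo.rank_eq_add
    (hstep : ∀ F ∈ 𝓕, ∀ F' ∈ 𝓕, FlatCovers 𝓕 F F' → r F' = r F + 1)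
    {a b : Submodule K E} {m : ℕ} {c : Fin (m + 1) → Submodule K E}
    (hc : IsMaxChainTo 𝓕 a b m c) : r b = r a + m := by
  obtain ⟨hmem, -, rfl, rfl, hcovs⟩ := hc
  have key (i : Fin (m + 1)) : r (c i) = r (c 0) + i := by
    induction i using Fin.induction with
    | zero => simp
    | succ i ih =>
      rw [hstep _ (hmem _) _ (hmem _) (hcovs i), ih, Fin.val_succ, Fin.val_castSucc]
      push_cast
      ring
  simpa using key (Fin.last m)

theorem rank_lt_rank_sup_of_le_mem_rankFlats (hmono : Monotone r)
    (hsub : ∀ A B, r (A ⊔ B) + r (A ⊓ B) ≤ r A + r B) {F B x : Submodule K E}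
    (hF : F ∈ rankFlats r) (hBF : B ≤ F) (hx : finrank K x = 1) (hxF : ¬ x ≤ F) :
    r B < r (B ⊔ x) := by
  have hsup : F ⊔ (B ⊔ x) = F ⊔ x := by rw [← sup_assoc, sup_eq_left.2 hBF]
  have h₁ := hsub F (B ⊔ x)
  have h₂ := hmono (le_inf hBF le_sup_left : B ≤ F ⊓ (B ⊔ x))
  have h₃ := hF x hx hxF
  rw [hsup] at h₁
  linarith

theorem inf_mem_rankFlats (hmono : Monotone r) (hsub : ∀ A B, r (A ⊔ B) + r (A ⊓ B) ≤ r A + r B)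
    {F₁ F₂ : Submodule K E} (h₁ : F₁ ∈ rankFlats r) (h₂ : F₂ ∈ rankFlats r) :
    F₁ ⊓ F₂ ∈ rankFlats r := by
  intro x hx hx₁₂
  by_cases hx₁ : x ≤ F₁
  · exact rank_lt_rank_sup_of_le_mem_rankFlats hmono hsub h₂ inf_le_right hx
      fun hx₂ => hx₁₂ (le_inf hx₁ hx₂)
  · exact rank_lt_rank_sup_of_le_mem_rankFlats hmono hsub h₁ inf_le_left hx hx₁

variable [FiniteDimensional K E]

theorem exists_mem_rankFlats_rank_eq (hmono : Monotone r) (B : Submodule K E) :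
    ∃ G ∈ rankFlats r, B ≤ G ∧ r G = r B := by
  obtain ⟨G, ⟨hBG, hrG⟩, hmax⟩ :=
    exists_maximal_of_wellFoundedGT (fun G => B ≤ G ∧ r G = r B) ⟨B, le_rfl, rfl⟩
  refine ⟨G, fun x hx hxG => (hmono le_sup_left).lt_of_ne fun h => hxG ?_, hBG, hrG⟩
  exact le_sup_right.trans (hmax ⟨hBG.trans le_sup_left, h ▸ hrG⟩ le_sup_left)

theorem IsFlatClosure.rank_closure (hmono : Monotone r) (hC : IsFlatClosure (rankFlats r) Cl)
    (A : Submodule K E) : r (Cl A) = r A := by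
  obtain ⟨G, hG, hAG, hrG⟩ := exists_mem_rankFlats_rank_eq hmono A
  exact le_antisymm (hrG ▸ hmono (hC.closure_le hG hAG)) (hmono (hC.le_closure A))

theorem rank_eq_add_one_of_flatCovers (hrank : ∀ A : Submodule K E, 0 ≤ r A ∧ r A ≤ finrank K A)
    (hmono : Monotone r) (hsub : ∀ A B, r (A ⊔ B) + r (A ⊓ B) ≤ r A + r B)
    {F F' : Submodule K E} (hF : F ∈ rankFlats r) (hF' : F' ∈ rankFlats r)
    (hcov : FlatCovers (rankFlats r) F F') : r F' = r F + 1 := by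
  obtain ⟨x, hx, hxF', hxF⟩ := exists_line_of_lt hcov.1
  have hlow : r F < r (F ⊔ x) := hF x hx hxF
  have hup : r (F ⊔ x) ≤ r F + 1 := by
    have hrx : r x ≤ 1 := by simpa [hx] using (hrank x).2
    linarith [hsub F x, (hrank (F ⊓ x)).1]
  -- `F'` is the flat `G ⊓ F'`, where `G ⊇ F ⊔ x` is a flat of the same rank as `F ⊔ x`.
  obtain ⟨G, hG, hG_ge, hrG⟩ := exists_mem_rankFlats_rank_eq hmono (F ⊔ x)
  have hFG : F < G ⊓ F' :=
    (left_lt_sup.2 hxF).trans_le (le_inf hG_ge (sup_le hcov.1.le hxF'))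
  have hGF' : G ⊓ F' = F' :=
    hcov.eq_of_lt_of_le (inf_mem_rankFlats hmono hsub hG hF') hFG inf_le_right
  have h₁ : r F' ≤ r (F ⊔ x) := hrG ▸ hGF' ▸ hmono inf_le_left
  have h₂ : r (F ⊔ x) ≤ r F' := hmono (sup_le hcov.1.le hxF')
  omega

theorem rank_eq_of_isMaxChainTo_rankFlats
    (hrank : ∀ A : Submodule K E, 0 ≤ r A ∧ r A ≤ finrank K A)
    (hmono : Monotone r) (hsub : ∀ A B, r (A ⊔ B) + r (A ⊓ B) ≤ r A + r B)
    (hC : IsFlatClosure (rankFlats r) Cl) {r' : Submodule K E → ℕ}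
    (hr' : ∀ A, ∃ c : Fin (r' A + 1) → Submodule K E,
      IsMaxChainTo (rankFlats r) (Cl ⊥) (Cl A) (r' A) c)
    (A : Submodule K E) : r A = r' A := by
  obtain ⟨c, hc⟩ := hr' A
  have hbot : r ⊥ = 0 := le_antisymm (by simpa using (hrank ⊥).2) (hrank ⊥).1
  have := hc.rank_eq_add fun F hF F' hF' => rank_eq_add_one_of_flatCovers hrank hmono hsub hF hF'
  rwa [hC.rank_closure hmono, hC.rank_closure hmono, hbot, zero_add] at this

end RankFunction

end QMatroidFlats

theorem stmt8_general {K E : Type*} [Field K] [AddCommGroup E] [Module K E]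
    [FiniteDimensional K E] :
    (∀ (𝓕 : Set (Submodule K E)), FlatAxioms 𝓕 →
      ∀ (C : Submodule K E → Submodule K E),
        (∀ A : Submodule K E, C A ∈ 𝓕 ∧ A ≤ C A ∧ ∀ G ∈ 𝓕, A ≤ G → C A ≤ G) →
      ∀ (r : Submodule K E → ℕ),
        (∀ A : Submodule K E,
          ∃ c : Fin (r A + 1) → Submodule K E, IsMaxChainTo 𝓕 (C ⊥) (C A) (r A) c) →
      {F : Submodule K E |
        ∀ x : Submodule K E, Module.finrank K x = 1 → ¬ x ≤ F → r F < r (F ⊔ x)} = 𝓕) ∧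
    (∀ (r : Submodule K E → ℤ),
      (∀ A : Submodule K E, 0 ≤ r A ∧ r A ≤ Module.finrank K A) →
      (∀ A B : Submodule K E, A ≤ B → r A ≤ r B) →
      (∀ A B : Submodule K E, r (A ⊔ B) + r (A ⊓ B) ≤ r A + r B) →
      ∀ (C : Submodule K E → Submodule K E),
        (∀ A : Submodule K E,
          C A ∈ {F : Submodule K E | ∀ x : Submodule K E,
                  Module.finrank K x = 1 → ¬ x ≤ F → r F < r (F ⊔ x)} ∧
          A ≤ C A ∧
          ∀ G ∈ {F : Submodule K E | ∀ x : Submodule K E,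
                  Module.finrank K x = 1 → ¬ x ≤ F → r F < r (F ⊔ x)},
            A ≤ G → C A ≤ G) →
      ∀ (r' : Submodule K E → ℕ),
        (∀ A : Submodule K E,
          ∃ c : Fin (r' A + 1) → Submodule K E,
            IsMaxChainTo
              {F : Submodule K E | ∀ x : Submodule K E,
                Module.finrank K x = 1 → ¬ x ≤ F → r F < r (F ⊔ x)}
              (C ⊥) (C A) (r' A) c) →
      ∀ A : Submodule K E, r A = r' A) :=
  ⟨fun _ hF _ hC _ hr => hF.rankFlats_eq hC hr,
    fun _ hrank hmono hsub _ hC _ hr' => rank_eq_of_isMaxChainTo_rankFlats hrank hmono hsub hC hr'⟩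

/-- (i) If 𝓕 satisfies (F1)-(F3) and r = r_𝓕 is the induced rank
function (length of a maximal chain of flats from C({0}) to C(A)), then the set
of flats of the q-matroid (E,r) is exactly 𝓕.  (ii) Conversely, if (E,r) is a
q-matroid, 𝓕_r its set of flats, and r' the rank function induced by 𝓕_r via
maximal chains, then r = r'. -/
theorem stmt8 {K E : Type*} [Field K] [Fintype K] [AddCommGroup E] [Module K E]
    [FiniteDimensional K E] :
    (∀ (𝓕 : Set (Submodule K E)), FlatAxioms 𝓕 →
      ∀ (C : Submodule K E → Submodule K E),
        (∀ A : Submodule K E, C A ∈ 𝓕 ∧ A ≤ C A ∧ ∀ G ∈ 𝓕, A ≤ G → C A ≤ G) →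
      ∀ (r : Submodule K E → ℕ),
        (∀ A : Submodule K E,
          ∃ c : Fin (r A + 1) → Submodule K E, IsMaxChainTo 𝓕 (C ⊥) (C A) (r A) c) →
      {F : Submodule K E |
        ∀ x : Submodule K E, Module.finrank K x = 1 → ¬ x ≤ F → r F < r (F ⊔ x)} = 𝓕) ∧
    (∀ (r : Submodule K E → ℤ),
      (∀ A : Submodule K E, 0 ≤ r A ∧ r A ≤ Module.finrank K A) →
      (∀ A B : Submodule K E, A ≤ B → r A ≤ r B) →
      (∀ A B : Submodule K E, r (A ⊔ B) + r (A ⊓ B) ≤ r A + r B) →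
      ∀ (C : Submodule K E → Submodule K E),
        (∀ A : Submodule K E,
          C A ∈ {F : Submodule K E | ∀ x : Submodule K E,
                  Module.finrank K x = 1 → ¬ x ≤ F → r F < r (F ⊔ x)} ∧
          A ≤ C A ∧
          ∀ G ∈ {F : Submodule K E | ∀ x : Submodule K E,
                  Module.finrank K x = 1 → ¬ x ≤ F → r F < r (F ⊔ x)},
            A ≤ G → C A ≤ G) →
      ∀ (r' : Submodule K E → ℕ),
        (∀ A : Submodule K E,
          ∃ c : Fin (r' A + 1) → Submodule K E,
            IsMaxChainTo
              {F : Submodule K E | ∀ x : Submodule K E,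
                Module.finrank K x = 1 → ¬ x ≤ F → r F < r (F ⊔ x)}
              (C ⊥) (C A) (r' A) c) →
      ∀ A : Submodule K E, r A = r' A) :=
  stmt8_general
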